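/- arXiv:1702.07150 — 2 statements merged into one kernel-verified Lean document; each statement's English description precedes it below -/
import Mathlib

section
/- Let Q̲ be a lower transition rate operator on a finite state space 𝒳. Then ‖Q̲‖ = 2·max{ |[Q̲ 1_x](x)| : x ∈ 𝒳 }. -/
open scoped BigOperators

variable {X : Type*} [Fintype X] [Nonempty X] [DecidableEq X]

/-- The maximum norm on real-valued functions on a finite state space. -/
noncomputable def maxNorm (f : X → ℝ) : ℝ := ⨆ x, |f x|

/-- The variation seminorm `max f - min f`. -/
noncomputable def varNorm (f : X → ℝ) : ℝ := (⨆ x, f x) - (⨅ x, f x)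

/-- The centred seminorm `(max f - min f)/2`. -/
noncomputable def centNorm (f : X → ℝ) : ℝ := ((⨆ x, f x) - (⨅ x, f x)) / 2

/-- Indicator function of the singleton `{x}`. -/
def indic (x : X) : X → ℝ := fun y => if y = x then 1 else 0

/-- A lower transition operator: dominates the minimum, is superadditive,
and is non-negatively homogeneous. -/
def IsLTO (T : (X → ℝ) → (X → ℝ)) : Prop :=
  (∀ f x, (⨅ y, f y) ≤ T f x) ∧
  (∀ f g x, T f x + T g x ≤ T (f + g) x) ∧
  (∀ (μ : ℝ), 0 ≤ μ → ∀ f, T (μ • f) = μ • T f)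

/-- A lower transition rate operator: vanishes on constants, is superadditive,
is non-negatively homogeneous, and is non-negative off the diagonal on indicators. -/
def IsLTRO (Q : (X → ℝ) → (X → ℝ)) : Prop :=
  (∀ γ : ℝ, Q (fun _ => γ) = 0) ∧
  (∀ f g x, Q f x + Q g x ≤ Q (f + g) x) ∧
  (∀ (μ : ℝ), 0 ≤ μ → ∀ f, Q (μ • f) = μ • Q f) ∧
  (∀ x y, x ≠ y → 0 ≤ Q (indic x) y)

/-- Operator norm induced by the maximum norm. -/
noncomputable def opNorm (A : (X → ℝ) → (X → ℝ)) : ℝ :=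
  sSup {r | ∃ f : X → ℝ, maxNorm f = 1 ∧ r = maxNorm (A f)}

/-- The (weak) coefficient of ergodicity. -/
noncomputable def coeffErg (A : (X → ℝ) → (X → ℝ)) : ℝ :=
  sSup {r | ∃ f : X → ℝ, (∀ x, 0 ≤ f x ∧ f x ≤ 1) ∧ r = varNorm (A f)}

/-!
For `‖f‖ ≤ c` the shift `f + c = ∑ₓ (f x + c) 1ₓ` is nonnegative, and `Q̲` ignores constants, so
superadditivity and positive homogeneity give
`Q̲ f y ≥ ∑ₓ (f x + c) [Q̲ 1ₓ](y) ≥ (f y + c) [Q̲ 1_y](y) ≥ -2c |[Q̲ 1_y](y)|`: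
the off-diagonal rates are nonnegative, and the diagonal one is nonpositive (take `f = 1`).
Together with `Q̲ f ≤ -Q̲(-f)` this bounds `|Q̲ f|` by `2‖f‖ maxₓ |[Q̲ 1ₓ](x)|`,
and `f = 2·1ₓ - 1` at a maximising `x` attains the bound.
-/
section maxNorm

omit [DecidableEq X]

omit [Fintype X] [Nonempty X] in
lemma maxNorm_nonneg (f : X → ℝ) : 0 ≤ maxNorm f :=
  Real.iSup_nonneg fun x => abs_nonneg (f x)

omit [Nonempty X] in
lemma abs_le_maxNorm (f : X → ℝ) (x : X) : |f x| ≤ maxNorm f :=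
  le_ciSup (f := fun x => |f x|) (Set.finite_range _).bddAbove x

omit [Fintype X] in
lemma maxNorm_le {f : X → ℝ} {c : ℝ} (h : ∀ x, |f x| ≤ c) : maxNorm f ≤ c :=
  ciSup_le h

omit [Fintype X] [Nonempty X] in
lemma opNorm_eq_of_isGreatest {A : (X → ℝ) → (X → ℝ)} {K : ℝ}
    (hbound : ∀ f, maxNorm (A f) ≤ K * maxNorm f)
    (hattain : ∃ f, maxNorm f = 1 ∧ maxNorm (A f) = K) : opNorm A = K := by
  obtain ⟨f₀, hf₀, hAf₀⟩ := hattain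
  refine IsGreatest.csSup_eq ⟨⟨f₀, hf₀, hAf₀.symm⟩, ?_⟩
  rintro r ⟨f, hf, rfl⟩
  simpa [hf] using hbound f

end maxNorm

namespace IsLTRO

variable {Q : (X → ℝ) → (X → ℝ)}

section

omit [Fintype X] [Nonempty X]

lemma map_zero (hQ : IsLTRO Q) : Q 0 = 0 := hQ.1 0

lemma map_add_const (hQ : IsLTRO Q) (f : X → ℝ) (c : ℝ) : Q (f + fun _ => c) = Q f := by
  funext x
  have hle := hQ.2.1 f (fun _ => c) x
  have hge := hQ.2.1 (f + fun _ => c) (fun _ => -c) x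
  rw [hQ.1 c] at hle
  rw [hQ.1 (-c), show ((f + fun _ => c) + fun _ => -c) = f by funext; simp] at hge
  simp only [Pi.zero_apply, add_zero] at hle hge
  linarith

lemma map_le_neg_map_neg (hQ : IsLTRO Q) (f : X → ℝ) (x : X) : Q f x ≤ -Q (-f) x := by
  have h := hQ.2.1 f (-f) x
  rw [add_neg_cancel, hQ.map_zero] at h
  simp only [Pi.zero_apply] at h
  linarith

lemma sum_map_le_map_sum (hQ : IsLTRO Q) {ι : Type*} (s : Finset ι) (g : ι → X → ℝ) (x : X) :
    ∑ i ∈ s, Q (g i) x ≤ Q (∑ i ∈ s, g i) x := by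
  classical
  induction s using Finset.induction with
  | empty => simp [hQ.map_zero]
  | insert a s ha ih =>
    rw [Finset.sum_insert ha, Finset.sum_insert ha]
    exact (add_le_add le_rfl ih).trans (hQ.2.1 _ _ x)

end

omit [Nonempty X]

lemma sum_mul_map_indic_le (hQ : IsLTRO Q) {g : X → ℝ} (hg : 0 ≤ g) (y : X) :
    ∑ x, g x * Q (indic x) y ≤ Q g y := by
  have hdecomp : ∑ x, g x • indic x = g := by
    funext z
    simp [indic, Finset.sum_apply]
  calc ∑ x, g x * Q (indic x) y = ∑ x, Q (g x • indic x) y := by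
        simp only [hQ.2.2.1 _ (hg _), Pi.smul_apply, smul_eq_mul]
    _ ≤ Q (∑ x, g x • indic x) y := hQ.sum_map_le_map_sum _ _ y
    _ = Q g y := by rw [hdecomp]

lemma mul_map_indic_self_le (hQ : IsLTRO Q) {g : X → ℝ} (hg : 0 ≤ g) (y : X) :
    g y * Q (indic y) y ≤ Q g y := by
  have hoff : ∀ x ∈ Finset.univ, x ∉ ({y} : Finset X) → 0 ≤ g x * Q (indic x) y :=
    fun x _ hx => mul_nonneg (hg x) (hQ.2.2.2 x y (Finset.notMem_singleton.mp hx))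
  calc g y * Q (indic y) y = ∑ x ∈ {y}, g x * Q (indic x) y := Finset.sum_singleton _ _ |>.symm
    _ ≤ ∑ x, g x * Q (indic x) y :=
        Finset.sum_le_sum_of_subset_of_nonneg (Finset.subset_univ _) hoff
    _ ≤ Q g y := hQ.sum_mul_map_indic_le hg y

lemma map_indic_self_nonpos (hQ : IsLTRO Q) (y : X) : Q (indic y) y ≤ 0 := by
  simpa [hQ.1 1] using hQ.mul_map_indic_self_le (g := fun _ => 1) (fun _ => zero_le_one) y

lemma neg_le_map (hQ : IsLTRO Q) (f : X → ℝ) (y : X) :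
    -(2 * maxNorm f * |Q (indic y) y|) ≤ Q f y := by
  set c := maxNorm f
  have hshift : 0 ≤ f + fun _ => c := fun x => by
    have := abs_le_maxNorm f x
    simp only [Pi.zero_apply, Pi.add_apply]
    linarith [neg_abs_le (f x)]
  have hfy : f y + c ≤ 2 * c := by linarith [le_abs_self (f y), abs_le_maxNorm f y]
  have hdiag := hQ.map_indic_self_nonpos y
  calc -(2 * c * |Q (indic y) y|) = 2 * c * Q (indic y) y := by
        rw [abs_of_nonpos hdiag]; ring
    _ ≤ (f y + c) * Q (indic y) y := mul_le_mul_of_nonpos_right hfy hdiag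
    _ ≤ Q (f + fun _ => c) y := hQ.mul_map_indic_self_le hshift y
    _ = Q f y := by rw [hQ.map_add_const]

lemma abs_map_le (hQ : IsLTRO Q) (f : X → ℝ) (y : X) :
    |Q f y| ≤ 2 * maxNorm f * |Q (indic y) y| := by
  have hneg := hQ.neg_le_map (-f) y
  have hmax : maxNorm (-f) = maxNorm f := by simp only [maxNorm, Pi.neg_apply, abs_neg]
  rw [hmax] at hneg
  exact abs_le.mpr ⟨hQ.neg_le_map f y, (hQ.map_le_neg_map_neg f y).trans (by linarith)⟩

end IsLTRO

omit [Fintype X] in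
lemma maxNorm_two_mul_indic_sub_one (x₀ : X) : maxNorm (fun z => 2 * indic x₀ z - 1) = 1 := by
  have h : ∀ z, |2 * indic x₀ z - 1| = 1 := fun z => by
    by_cases hz : z = x₀ <;> norm_num [indic, hz]
  simp only [maxNorm, h, ciSup_const]

theorem stmt1 (Q : (X → ℝ) → (X → ℝ)) (hQ : IsLTRO Q) :
    opNorm Q = 2 * (⨆ x, |Q (indic x) x|) := by
  set M := ⨆ x, |Q (indic x) x|
  have hdiag_le : ∀ y, |Q (indic y) y| ≤ M := fun y =>
    le_ciSup (f := fun x => |Q (indic x) x|) (Set.finite_range _).bddAbove y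
  have hbound : ∀ f, maxNorm (Q f) ≤ 2 * M * maxNorm f := fun f => maxNorm_le fun y =>
    (hQ.abs_map_le f y).trans (by nlinarith [maxNorm_nonneg f, hdiag_le y])
  obtain ⟨x₀, hx₀⟩ := Finite.exists_max fun x => |Q (indic x) x|
  have hM : M = |Q (indic x₀) x₀| := le_antisymm (ciSup_le hx₀) (hdiag_le x₀)
  set f₀ : X → ℝ := fun z => 2 * indic x₀ z - 1
  have hf₀ : maxNorm f₀ = 1 := maxNorm_two_mul_indic_sub_one x₀
  have hQf₀ : Q f₀ = (2 : ℝ) • Q (indic x₀) := by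
    rw [show f₀ = (2 : ℝ) • indic x₀ + fun _ => -1 by funext; simp [f₀]; ring,
      hQ.map_add_const, hQ.2.2.1 2 zero_le_two]
  refine opNorm_eq_of_isGreatest hbound ⟨f₀, hf₀, le_antisymm (by simpa [hf₀] using hbound f₀) ?_⟩
  calc 2 * M = |Q f₀ x₀| := by
        rw [hQf₀, Pi.smul_apply, smul_eq_mul, abs_mul, abs_two, hM]
    _ ≤ maxNorm (Q f₀) := abs_le_maxNorm _ _
end

section
/- For lower transition operators T̲ and S̲ on a finite state space, the coefficient of ergodicity is submultiplicative under composition: β(T̲ ∘ S̲) ≤ β(T̲)·β(S̲), where β(A) := max{‖Af‖_v : 0 ≤ f ≤ 1}. -/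
open scoped BigOperators

variable {X : Type*} [Fintype X] [Nonempty X] [DecidableEq X]

/-!
Every `g` is an affine image `varNorm g • h + min g` of some `h` with values in `[0, 1]`.
A lower transition operator commutes with adding constants and with non-negative scaling,
so `varNorm (T g) = varNorm g * varNorm (T h) ≤ β(T) * varNorm g`. Applied to `g = S f` with
`0 ≤ f ≤ 1`, this gives `varNorm (T (S f)) ≤ β(T) * β(S)`.
-/

section VariationSeminorm

variable {ι : Type*}

lemma varNorm_smul {a : ℝ} (ha : 0 ≤ a) (f : ι → ℝ) : varNorm (a • f) = a * varNorm f := by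
  simp only [varNorm, Pi.smul_apply, smul_eq_mul, ← Real.mul_iSup_of_nonneg ha,
    ← Real.mul_iInf_of_nonneg ha]
  ring

variable [Nonempty ι]

lemma varNorm_le_of_forall_mem_Icc {f : ι → ℝ} {a b : ℝ} (ha : ∀ x, a ≤ f x)
    (hb : ∀ x, f x ≤ b) : varNorm f ≤ b - a :=
  sub_le_sub (ciSup_le hb) (le_ciInf ha)

variable [Finite ι]

lemma varNorm_add_const (f : ι → ℝ) (c : ℝ) : varNorm (f + fun _ => c) = varNorm f := by
  simp only [varNorm, Pi.add_apply, ← ciSup_add (Finite.bddAbove_range f),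
    ← ciInf_add (Finite.bddBelow_range f)]
  ring

lemma varNorm_nonneg (f : ι → ℝ) : 0 ≤ varNorm f :=
  sub_nonneg.2 (ciInf_le_ciSup (Finite.bddBelow_range f) (Finite.bddAbove_range f))

lemma exists_eq_varNorm_smul_add_iInf (g : ι → ℝ) :
    ∃ h : ι → ℝ, (∀ x, 0 ≤ h x ∧ h x ≤ 1) ∧ g = varNorm g • h + fun _ => ⨅ x, g x := by
  have hmin (x : ι) : (⨅ y, g y) ≤ g x := ciInf_le (Finite.bddBelow_range g) x
  have hmax (x : ι) : g x ≤ ⨆ y, g y := le_ciSup (Finite.bddAbove_range g) x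
  rcases (varNorm_nonneg g).eq_or_lt with hv | hv
  · refine ⟨0, fun _ => ⟨le_rfl, zero_le_one⟩, funext fun x => ?_⟩
    simp only [varNorm] at hv
    simp only [Pi.add_apply, Pi.zero_apply, smul_zero, zero_add]
    linarith [hmin x, hmax x]
  · refine ⟨fun x => (g x - ⨅ y, g y) / varNorm g, fun x => ⟨?_, ?_⟩, funext fun x => ?_⟩
    · exact div_nonneg (sub_nonneg.2 (hmin x)) hv.le
    · rw [div_le_one hv, varNorm]
      linarith [hmax x]
    · simp only [Pi.add_apply, Pi.smul_apply, smul_eq_mul]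
      field_simp
      ring

end VariationSeminorm

namespace IsLTO

variable {ι : Type*} {T : (ι → ℝ) → ι → ℝ}

lemma map_zero (hT : IsLTO T) : T 0 = 0 := by
  simpa using hT.2.2 0 le_rfl 0

variable [Finite ι] [Nonempty ι]

lemma apply_le_iSup (hT : IsLTO T) (f : ι → ℝ) (x : ι) : T f x ≤ ⨆ y, f y := by
  have hsum := hT.2.1 f (-f) x
  rw [add_neg_cancel, hT.map_zero, Pi.zero_apply] at hsum
  have hneg : -⨆ y, f y ≤ T (-f) x :=
    (le_ciInf fun y => neg_le_neg (le_ciSup (Finite.bddAbove_range f) y)).trans (hT.1 (-f) x)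
  linarith

lemma apply_const (hT : IsLTO T) (c : ℝ) (x : ι) : T (fun _ => c) x = c :=
  le_antisymm (by simpa using hT.apply_le_iSup (fun _ => c) x)
    (by simpa using hT.1 (fun _ => c) x)

lemma apply_add_const (hT : IsLTO T) (f : ι → ℝ) (c : ℝ) :
    T (f + fun _ => c) = T f + fun _ => c := by
  funext x
  have hle := hT.2.1 f (fun _ => c) x
  have hge := hT.2.1 (f + fun _ => c) (fun _ => -c) x
  rw [show (f + fun _ => c) + (fun _ => -c) = f by funext; simp] at hge
  rw [hT.apply_const] at hle hge
  simp only [Pi.add_apply]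
  linarith

lemma varNorm_apply_le (hT : IsLTO T) (f : ι → ℝ) : varNorm (T f) ≤ varNorm f :=
  varNorm_le_of_forall_mem_Icc (hT.1 f) (hT.apply_le_iSup f)

lemma varNorm_apply_le_coeffErg (hT : IsLTO T) {f : ι → ℝ} (hf : ∀ x, 0 ≤ f x ∧ f x ≤ 1) :
    varNorm (T f) ≤ coeffErg T := by
  refine le_csSup ⟨1, ?_⟩ ⟨f, hf, rfl⟩
  rintro _ ⟨g, hg, rfl⟩
  simpa using (hT.varNorm_apply_le g).trans
    (varNorm_le_of_forall_mem_Icc (fun x => (hg x).1) (fun x => (hg x).2))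

lemma coeffErg_nonneg (hT : IsLTO T) : 0 ≤ coeffErg T :=
  (varNorm_nonneg _).trans (hT.varNorm_apply_le_coeffErg (f := 0) fun _ => ⟨le_rfl, zero_le_one⟩)

lemma varNorm_apply_le_coeffErg_mul (hT : IsLTO T) (g : ι → ℝ) :
    varNorm (T g) ≤ coeffErg T * varNorm g := by
  obtain ⟨h, hh, hg⟩ := exists_eq_varNorm_smul_add_iInf g
  calc varNorm (T g) = varNorm g * varNorm (T h) := by
        conv_lhs => rw [hg]
        rw [hT.apply_add_const, varNorm_add_const, hT.2.2 _ (varNorm_nonneg g),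
          varNorm_smul (varNorm_nonneg g)]
    _ ≤ varNorm g * coeffErg T :=
        mul_le_mul_of_nonneg_left (hT.varNorm_apply_le_coeffErg hh) (varNorm_nonneg g)
    _ = coeffErg T * varNorm g := mul_comm _ _

end IsLTO

theorem stmt12 (T S : (X → ℝ) → (X → ℝ)) (hT : IsLTO T) (hS : IsLTO S) :
    coeffErg (T ∘ S) ≤ coeffErg T * coeffErg S := by
  refine csSup_le ⟨_, 0, fun _ => ⟨le_rfl, zero_le_one⟩, rfl⟩ ?_
  rintro _ ⟨f, hf, rfl⟩
  calc varNorm (T (S f)) ≤ coeffErg T * varNorm (S f) := hT.varNorm_apply_le_coeffErg_mul (S f)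
    _ ≤ coeffErg T * coeffErg S :=
        mul_le_mul_of_nonneg_left (hS.varNorm_apply_le_coeffErg hf) hT.coeffErg_nonneg
end
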